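/- Let W ∈ ℂ²⊗ℂ²⊗ℂ² be the W-state, the 3-mode tensor W = (e₂⊗e₁⊗e₁ + e₁⊗e₂⊗e₁ + e₁⊗e₁⊗e₂)/√3, where e₁,e₂ is the standard basis of ℂ². Then ‖W‖_{∞,ℂ} = 2/3 and ‖W‖_{1,ℂ} = 3/2. -/

import Mathlib

noncomputable section


/-- The Euclidean norm of a vector in `𝕜^k`. -/
def vnorm {𝕜 : Type*} [RCLike 𝕜] {k : ℕ} (x : Fin k → 𝕜) : ℝ :=
  Real.sqrt (∑ i, ‖x i‖ ^ 2)

/-- The rank-one tensor `x₁ ⊗ ⋯ ⊗ x_d` on `𝕜^n`. -/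
def rankOne {𝕜 : Type*} [RCLike 𝕜] {d n : ℕ} (x : Fin d → Fin n → 𝕜) :
    (Fin d → Fin n) → 𝕜 :=
  fun i => ∏ j, x j (i j)

/-- The standard inner product `⟨T, Y⟩ = ∑ tᵢ · conj yᵢ` of tensors. -/
def tinner {𝕜 : Type*} [RCLike 𝕜] {d n : ℕ} (T Y : (Fin d → Fin n) → 𝕜) : 𝕜 :=
  ∑ i, T i * (starRingEnd 𝕜) (Y i)

/-- The Hilbert–Schmidt norm of a tensor. -/
def hsNorm {𝕜 : Type*} [RCLike 𝕜] {d n : ℕ} (T : (Fin d → Fin n) → 𝕜) : ℝ :=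
  Real.sqrt (∑ i, ‖T i‖ ^ 2)

/-- The spectral norm of a tensor:
`max {|⟨T, x₁⊗⋯⊗x_d⟩| : ‖x_j‖ = 1 for all j}`. -/
def specNorm {𝕜 : Type*} [RCLike 𝕜] {d n : ℕ} (T : (Fin d → Fin n) → 𝕜) : ℝ :=
  sSup {r : ℝ | ∃ x : Fin d → Fin n → 𝕜, (∀ j, vnorm (x j) = 1) ∧
    r = ‖tinner T (rankOne x)‖}

/-- The nuclear norm of a tensor:
`min {∑ᵢ ∏ⱼ ‖x_{i,j}‖ : T = ∑ᵢ x_{i,1}⊗⋯⊗x_{i,d}}`. -/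
def nucNorm {𝕜 : Type*} [RCLike 𝕜] {d n : ℕ} (T : (Fin d → Fin n) → 𝕜) : ℝ :=
  sInf {r : ℝ | ∃ (m : ℕ) (x : Fin m → Fin d → Fin n → 𝕜),
    T = (∑ i, rankOne (x i)) ∧ r = ∑ i, ∏ j, vnorm (x i j)}

/-- `α(n^{×d}, 𝕜)`. -/
def alphaN (𝕜 : Type*) [RCLike 𝕜] (d n : ℕ) : ℝ :=
  sSup {r : ℝ | ∃ T : (Fin d → Fin n) → 𝕜, hsNorm T = 1 ∧ r = nucNorm T}

/-- `β(n^{×d}, 𝕜)`. -/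
def betaN (𝕜 : Type*) [RCLike 𝕜] (d n : ℕ) : ℝ :=
  sInf {r : ℝ | ∃ T : (Fin d → Fin n) → 𝕜, hsNorm T = 1 ∧ r = specNorm T}

/-- The `W`-state: `W = (e₂⊗e₁⊗e₁ + e₁⊗e₂⊗e₁ + e₁⊗e₁⊗e₂)/√3` on `ℂ²`. -/
def Wstate : (Fin 3 → Fin 2) → ℂ := fun i =>
  if (i 0 = 1 ∧ i 1 = 0 ∧ i 2 = 0) ∨ (i 0 = 0 ∧ i 1 = 1 ∧ i 2 = 0) ∨
      (i 0 = 0 ∧ i 1 = 0 ∧ i 2 = 1)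
  then (Real.sqrt 3 : ℂ)⁻¹ else 0

/-! The spectral bound `|⟨W, x ⊗ y ⊗ z⟩| ≤ 2/3 ‖x‖‖y‖‖z‖` reduces, after the triangle inequality,
to the real polynomial inequality `3 (a₁b₀c₀ + a₀b₁c₀ + a₀b₀c₁)² ≤ 4 ∏ (a₀² + a₁²)`, with equality
at `x = y = z = (√(2/3), √(1/3))`. Duality `1 = ⟨W, W⟩ ≤ ‖W‖_∞ ‖W‖₁` then gives `‖W‖₁ ≥ 3/2`, and a
decomposition of `W` into three rank-one terms built from a primitive cube root of unity `ω`
attains it. -/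

section General

variable {𝕜 : Type*} [RCLike 𝕜]

theorem vnorm_nonneg {k : ℕ} (x : Fin k → 𝕜) : 0 ≤ vnorm x :=
  Real.sqrt_nonneg _

theorem vnorm_sq {k : ℕ} (x : Fin k → 𝕜) : vnorm x ^ 2 = ∑ i, ‖x i‖ ^ 2 :=
  Real.sq_sqrt (by positivity)

theorem vnorm_smul {k : ℕ} (c : 𝕜) (x : Fin k → 𝕜) : vnorm (c • x) = ‖c‖ * vnorm x := by
  simp only [vnorm, Pi.smul_apply, smul_eq_mul, norm_mul, mul_pow, ← Finset.mul_sum]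
  rw [Real.sqrt_mul (by positivity), Real.sqrt_sq (norm_nonneg c)]

variable {d n : ℕ}

theorem rankOne_smul (c : Fin d → 𝕜) (x : Fin d → Fin n → 𝕜) :
    rankOne (fun j => c j • x j) = (∏ j, c j) • rankOne x := by
  funext i
  simp [rankOne, Finset.prod_mul_distrib]

theorem rankOne_const_pow (z : 𝕜) (i : Fin d → Fin n) :
    rankOne (fun _ b => z ^ (b : ℕ)) i = z ^ ∑ j, (i j : ℕ) :=
  Finset.prod_pow_eq_pow_sum _ _ _

theorem rankOne_apply_three (x : Fin 3 → Fin n → 𝕜) (a b c : Fin n) :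
    rankOne x ![a, b, c] = x 0 a * x 1 b * x 2 c := by
  simp [rankOne, Fin.prod_univ_three]

theorem tinner_sum_left {ι : Type*} (s : Finset ι) (T : ι → (Fin d → Fin n) → 𝕜)
    (Y : (Fin d → Fin n) → 𝕜) : tinner (∑ i ∈ s, T i) Y = ∑ i ∈ s, tinner (T i) Y := by
  simp only [tinner, Finset.sum_apply, Finset.sum_mul]
  exact Finset.sum_comm

theorem conj_tinner (T Y : (Fin d → Fin n) → 𝕜) : starRingEnd 𝕜 (tinner T Y) = tinner Y T := by
  simp [tinner, map_sum, mul_comm]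

theorem specNorm_eq_of_forall_le {T : (Fin d → Fin n) → 𝕜} {c : ℝ}
    (hle : ∀ x : Fin d → Fin n → 𝕜, (∀ j, vnorm (x j) = 1) → ‖tinner T (rankOne x)‖ ≤ c)
    (x₀ : Fin d → Fin n → 𝕜) (hx₀ : ∀ j, vnorm (x₀ j) = 1)
    (heq : ‖tinner T (rankOne x₀)‖ = c) : specNorm T = c := by
  refine IsGreatest.csSup_eq ⟨⟨x₀, hx₀, heq.symm⟩, ?_⟩
  rintro r ⟨x, hx, rfl⟩
  exact hle x hx

theorem norm_tinner_sum_rankOne_le {T : (Fin d → Fin n) → 𝕜} {c : ℝ}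
    (hT : ∀ x : Fin d → Fin n → 𝕜, ‖tinner T (rankOne x)‖ ≤ c * ∏ j, vnorm (x j))
    {m : ℕ} (x : Fin m → Fin d → Fin n → 𝕜) :
    ‖tinner (∑ i, rankOne (x i)) T‖ ≤ c * ∑ i, ∏ j, vnorm (x i j) := by
  rw [tinner_sum_left, Finset.mul_sum]
  refine (norm_sum_le _ _).trans (Finset.sum_le_sum fun i _ => ?_)
  rw [← conj_tinner, RCLike.norm_conj]
  exact hT (x i)

theorem nucNorm_eq_of_dual_certificate {T Y : (Fin d → Fin n) → 𝕜} {c : ℝ} (hc : 0 < c)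
    (hY : ∀ x : Fin d → Fin n → 𝕜, ‖tinner Y (rankOne x)‖ ≤ c * ∏ j, vnorm (x j))
    {m : ℕ} (x₀ : Fin m → Fin d → Fin n → 𝕜) (hT : T = ∑ i, rankOne (x₀ i))
    (hcost : c * ∑ i, ∏ j, vnorm (x₀ i j) = ‖tinner T Y‖) :
    nucNorm T = ∑ i, ∏ j, vnorm (x₀ i j) := by
  refine IsLeast.csInf_eq ⟨⟨m, x₀, hT, rfl⟩, ?_⟩
  rintro r ⟨m, x, rfl, rfl⟩
  exact le_of_mul_le_mul_left (hcost.trans_le (norm_tinner_sum_rankOne_le hY x)) hc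

end General

theorem Fintype.sum_fin_succ_pi {α M : Type*} [Fintype α] [AddCommMonoid M] {n : ℕ}
    (g : (Fin (n + 1) → α) → M) : ∑ f, g f = ∑ a, ∑ f : Fin n → α, g (Matrix.vecCons a f) := by
  rw [← (Fin.consEquiv fun _ => α).sum_comp, Fintype.sum_prod_type]
  rfl

theorem tinner_Wstate (Y : (Fin 3 → Fin 2) → ℂ) :
    tinner Wstate Y = (Real.sqrt 3 : ℂ)⁻¹ *
      starRingEnd ℂ (Y ![1, 0, 0] + Y ![0, 1, 0] + Y ![0, 0, 1]) := by
  have h : ∀ i : Fin 0 → Fin 2, i = ![] := fun i => Subsingleton.elim _ _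
  simp only [tinner, Fintype.sum_fin_succ_pi, Fintype.sum_unique, Fin.sum_univ_two, h]
  simp [Wstate, mul_add, add_assoc, add_comm]

theorem Wstate_apply (i : Fin 3 → Fin 2) :
    Wstate i = if ∑ j, (i j : ℕ) = 1 then (Real.sqrt 3 : ℂ)⁻¹ else 0 := by
  have key : ∀ i : Fin 3 → Fin 2, ((i 0 = 1 ∧ i 1 = 0 ∧ i 2 = 0) ∨ (i 0 = 0 ∧ i 1 = 1 ∧ i 2 = 0) ∨
      (i 0 = 0 ∧ i 1 = 0 ∧ i 2 = 1)) ↔ ∑ j, (i j : ℕ) = 1 := by decide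
  simp only [Wstate, key]

theorem three_mul_sq_mixed_le (a₀ a₁ b₀ b₁ c₀ c₁ : ℝ) :
    3 * (a₁ * b₀ * c₀ + a₀ * b₁ * c₀ + a₀ * b₀ * c₁) ^ 2 ≤
      4 * ((a₀ ^ 2 + a₁ ^ 2) * (b₀ ^ 2 + b₁ ^ 2) * (c₀ ^ 2 + c₁ ^ 2)) := by
  nlinarith [sq_nonneg (a₁ * (b₁ * c₀ + b₀ * c₁) - a₀ * (b₀ * c₀)),
    mul_nonneg (by positivity : (0 : ℝ) ≤ a₀ ^ 2 + a₁ ^ 2) (sq_nonneg (b₀ * c₀ - 2 * b₁ * c₁)),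
    mul_nonneg (by positivity : (0 : ℝ) ≤ a₀ ^ 2 + a₁ ^ 2) (sq_nonneg (b₀ * c₁ - b₁ * c₀)),
    sq_nonneg (b₀ * c₀ - 2 * b₁ * c₁), sq_nonneg (b₀ * c₁ - b₁ * c₀)]

theorem norm_tinner_Wstate_rankOne_le (x : Fin 3 → Fin 2 → ℂ) :
    ‖tinner Wstate (rankOne x)‖ ≤ 2 / 3 * ∏ j, vnorm (x j) := by
  set a : Fin 3 → Fin 2 → ℝ := fun j b => ‖x j b‖
  set S := a 0 1 * a 1 0 * a 2 0 + a 0 0 * a 1 1 * a 2 0 + a 0 0 * a 1 0 * a 2 1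
  have h3 : Real.sqrt 3 ^ 2 = 3 := Real.sq_sqrt (by norm_num)
  have hle : ‖tinner Wstate (rankOne x)‖ ≤ (Real.sqrt 3)⁻¹ * S := by
    rw [tinner_Wstate, norm_mul, RCLike.norm_conj, norm_inv, Complex.norm_real,
      Real.norm_of_nonneg (Real.sqrt_nonneg 3)]
    gcongr
    refine norm_add₃_le.trans_eq ?_
    simp only [rankOne_apply_three, norm_mul, S, a]
  have hprod : 0 ≤ ∏ j, vnorm (x j) := Finset.prod_nonneg fun j _ => vnorm_nonneg (x j)
  rw [← sq_le_sq₀ (norm_nonneg _) (by positivity)]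
  calc ‖tinner Wstate (rankOne x)‖ ^ 2
      ≤ ((Real.sqrt 3)⁻¹ * S) ^ 2 := pow_le_pow_left₀ (norm_nonneg _) hle 2
    _ = S ^ 2 / 3 := by rw [mul_pow, inv_pow, h3, inv_mul_eq_div]
    _ ≤ 4 / 9 * ((a 0 0 ^ 2 + a 0 1 ^ 2) * (a 1 0 ^ 2 + a 1 1 ^ 2) * (a 2 0 ^ 2 + a 2 1 ^ 2)) := by
        linarith [three_mul_sq_mixed_le (a 0 0) (a 0 1) (a 1 0) (a 1 1) (a 2 0) (a 2 1)]
    _ = (2 / 3 * ∏ j, vnorm (x j)) ^ 2 := by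
        simp only [Fin.prod_univ_three, mul_pow, vnorm_sq, Fin.sum_univ_two, a]
        ring

theorem sum_cubeRoot_pow_mul {ω : ℂ} (hω : IsPrimitiveRoot ω 3) (z : ℂ) {m : ℕ} (hm : m ≤ 3) :
    ∑ k : Fin 3, ω ^ (2 * (k : ℕ)) * (ω ^ (k : ℕ) * z) ^ m = if m = 1 then 3 * z else 0 := by
  have h3 : ω ^ 3 = 1 := hω.pow_eq_one
  have h1 : 1 + ω + ω ^ 2 = 0 := by
    simpa [Finset.sum_range_succ] using hω.geom_sum_eq_zero (by norm_num)
  rw [Fin.sum_univ_three, Fin.val_zero, Fin.val_one, Fin.val_two]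
  interval_cases m
  · rw [if_neg zero_ne_one]
    linear_combination h1 + ω * h3
  · rw [if_pos rfl]
    linear_combination z * (ω ^ 3 + 2) * h3
  · rw [if_neg (by norm_num)]
    linear_combination z ^ 2 * h1 + z ^ 2 * (ω + ω ^ 2 * (ω ^ 3 + 1)) * h3
  · rw [if_neg (by norm_num)]
    linear_combination z ^ 3 * h1 + z ^ 3 * (ω ^ 2 + ω * (ω ^ 6 + ω ^ 3 + 1)) * h3

/-- `W = ∑ₖ λ ω^{2k} (e₁ + ω^k s e₂)^{⊗3}` with `λ = (3 s √3)⁻¹`: the phase `ω^{2k}` makes the sum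
over `k` kill every entry whose weight `m` (number of `e₂` factors) has `m + 2 ≢ 0 mod 3`.
Any `s ≠ 0` works; `s = 1/√2` minimises the cost `(1 + s²)^{3/2} / (√3 s)`. -/
def wDecomp (ω : ℂ) (s : ℝ) : Fin 3 → Fin 3 → Fin 2 → ℂ := fun k j =>
  (if j = 0 then ((3 * s * Real.sqrt 3 : ℝ) : ℂ)⁻¹ * ω ^ (2 * (k : ℕ)) else 1) •
    fun b : Fin 2 => (ω ^ (k : ℕ) * s) ^ (b : ℕ)

theorem rankOne_wDecomp (ω : ℂ) (s : ℝ) (k : Fin 3) (i : Fin 3 → Fin 2) :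
    rankOne (wDecomp ω s k) i = ((3 * s * Real.sqrt 3 : ℝ) : ℂ)⁻¹ *
      (ω ^ (2 * (k : ℕ)) * (ω ^ (k : ℕ) * s) ^ ∑ j, (i j : ℕ)) := by
  unfold wDecomp
  rw [rankOne_smul, Pi.smul_apply, rankOne_const_pow, Finset.prod_ite_eq']
  simp [mul_assoc]

theorem Wstate_eq_sum_rankOne_wDecomp {ω : ℂ} (hω : IsPrimitiveRoot ω 3) {s : ℝ} (hs : s ≠ 0) :
    Wstate = ∑ k, rankOne (wDecomp ω s k) := by
  funext i
  have hm : ∀ i : Fin 3 → Fin 2, ∑ j, (i j : ℕ) ≤ 3 := by decide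
  simp only [Finset.sum_apply, rankOne_wDecomp, ← Finset.mul_sum, sum_cubeRoot_pow_mul hω _ (hm i),
    Wstate_apply]
  split_ifs
  · have hs' : (s : ℂ) ≠ 0 := by exact_mod_cast hs
    have h3 : Real.sqrt 3 ≠ 0 := by positivity
    push_cast
    field_simp
  · simp

theorem prod_vnorm_wDecomp {ω : ℂ} (hω : IsPrimitiveRoot ω 3) {s : ℝ} (hs : 0 < s) (k : Fin 3) :
    ∏ j, vnorm (wDecomp ω s k j) = (3 * s * Real.sqrt 3)⁻¹ * Real.sqrt (1 + s ^ 2) ^ 3 := by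
  have hω1 : ‖ω‖ = 1 := hω.norm'_eq_one (by norm_num)
  have hv : vnorm (fun b : Fin 2 => (ω ^ (k : ℕ) * s) ^ (b : ℕ)) = Real.sqrt (1 + s ^ 2) := by
    simp [vnorm, Fin.sum_univ_two, hω1, abs_of_pos hs]
  simp only [wDecomp, vnorm_smul, hv, Fin.prod_univ_three]
  rw [if_true, if_neg (by decide), if_neg (by decide), norm_mul, norm_inv, Complex.norm_real,
    Real.norm_of_nonneg (by positivity), norm_pow, hω1, one_pow, mul_one, norm_one]
  ring

theorem specNorm_Wstate : specNorm Wstate = 2 / 3 := by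
  have h2 : (Real.sqrt 2 : ℂ) ^ 2 = 2 := by norm_cast; simp
  have h3 : (Real.sqrt 3 : ℂ) ^ 2 = 3 := by norm_cast; simp
  have h3' : (Real.sqrt 3 : ℂ) ≠ 0 := by norm_cast; positivity
  set u : Fin 2 → ℂ := ![Real.sqrt 2 / Real.sqrt 3, (Real.sqrt 3 : ℂ)⁻¹]
  have hu : vnorm u = 1 := by
    rw [vnorm, Real.sqrt_eq_one]
    norm_num [u, Fin.sum_univ_two, div_pow, inv_pow]
  have hval : tinner Wstate (rankOne fun _ => u) = 2 / 3 := by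
    simp only [tinner_Wstate, rankOne_apply_three, u, Matrix.cons_val_zero, Matrix.cons_val_one,
      Matrix.cons_val_fin_one, map_add, map_mul, map_inv₀, map_div₀, Complex.conj_ofReal]
    field_simp
    linear_combination 9 * h2 - 2 * ((Real.sqrt 3 : ℂ) ^ 2 + 3) * h3
  refine specNorm_eq_of_forall_le (fun x hx => ?_) (fun _ => u) (fun _ => hu) ?_
  · simpa [hx] using norm_tinner_Wstate_rankOne_le x
  · rw [hval]
    norm_num

theorem tinner_Wstate_self : tinner Wstate Wstate = 1 := by
  have h3 : (Real.sqrt 3 : ℂ) ^ 2 = 3 := by norm_cast; simp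
  obtain ⟨h₁, h₂, h₃⟩ : Wstate ![1, 0, 0] = (Real.sqrt 3 : ℂ)⁻¹ ∧
      Wstate ![0, 1, 0] = (Real.sqrt 3 : ℂ)⁻¹ ∧ Wstate ![0, 0, 1] = (Real.sqrt 3 : ℂ)⁻¹ := by
    simp [Wstate]
  rw [tinner_Wstate, h₁, h₂, h₃, map_add, map_add, map_inv₀, Complex.conj_ofReal]
  field_simp
  linear_combination -h3

theorem sum_prod_vnorm_wDecomp {ω : ℂ} (hω : IsPrimitiveRoot ω 3) :
    ∑ k, ∏ j, vnorm (wDecomp ω (Real.sqrt 2)⁻¹ k j) = 3 / 2 := by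
  have h2 : Real.sqrt 2 ^ 2 = 2 := Real.sq_sqrt (by norm_num)
  have h3 : Real.sqrt 3 ^ 2 = 3 := Real.sq_sqrt (by norm_num)
  have hnorm : Real.sqrt (1 + (Real.sqrt 2)⁻¹ ^ 2) = Real.sqrt 3 / Real.sqrt 2 := by
    rw [inv_pow, h2, show (1 : ℝ) + 2⁻¹ = 3 / 2 by norm_num, Real.sqrt_div' _ (by norm_num)]
  have hs : 0 < (Real.sqrt 2)⁻¹ := by positivity
  simp only [prod_vnorm_wDecomp hω hs, hnorm, Finset.sum_const, Finset.card_univ, Fintype.card_fin,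
    nsmul_eq_mul]
  field_simp
  rw [h2, h3]
  norm_num

theorem nucNorm_Wstate : nucNorm Wstate = 3 / 2 := by
  have hω := Complex.isPrimitiveRoot_exp 3 (by norm_num)
  have hcost := sum_prod_vnorm_wDecomp hω
  rw [← hcost]
  refine nucNorm_eq_of_dual_certificate (c := 2 / 3) (by norm_num) norm_tinner_Wstate_rankOne_le _
    (Wstate_eq_sum_rankOne_wDecomp hω (by positivity)) ?_
  rw [hcost, tinner_Wstate_self]
  norm_num

/-- `‖W‖_∞ = 2/3` and `‖W‖₁ = 3/2`. -/
theorem stmt15 : specNorm Wstate = 2 / 3 ∧ nucNorm Wstate = 3 / 2 :=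
  ⟨specNorm_Wstate, nucNorm_Wstate⟩
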